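/- For any valuation profile v, any menu 𝓜 and any 1 ≤ k ≤ N, the k-th rank guarantee satisfies Rᵏ_𝓜(v) ≥ (1/N) Σ_{n=1}^{N} max_{X ∈ 𝓑(𝓜)} Σ_{b∈X} vⁿ_b − (k−1)·|𝓜|·v̄/N. -/

import Mathlib

open MeasureTheory
open scoped ENNReal BigOperators

namespace RankGuaranteedAuctions

/-- A bundle of items, where the set of items is `Fin M`. -/
abbrev Bundle (M : ℕ) := Finset (Fin M)

/-- A valuation assigns a real value to every bundle. -/
abbrev Valuation (M : ℕ) := Bundle M → ℝ

/-- A valuation is normalized: value `0` for the empty bundle and values in `[0, vbar]`. -/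
def IsValuation (M : ℕ) (vbar : ℝ) (v : Valuation M) : Prop :=
  v ∅ = 0 ∧ ∀ b : Bundle M, 0 ≤ v b ∧ v b ≤ vbar

/-- A menu is a nonempty collection of nonempty bundles. -/
def IsMenu (M : ℕ) (Menu : Finset (Bundle M)) : Prop :=
  Menu.Nonempty ∧ ∅ ∉ Menu

/-- The complete menu `2^S` of all nonempty bundles. -/
noncomputable def completeMenu (M : ℕ) : Finset (Bundle M) :=
  Finset.univ.erase ∅

/-- A feasible allocation: a set of pairwise disjoint bundles from the menu. -/
def Feasible (M : ℕ) (Menu X : Finset (Bundle M)) : Prop :=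
  X ⊆ Menu ∧ ∀ b ∈ X, ∀ b' ∈ X, b ≠ b' → Disjoint b b'

/-- The maximum of `∑ b ∈ X, f b` over feasible allocations `X` from the menu. -/
noncomputable def maxAlloc (M : ℕ) (Menu : Finset (Bundle M)) (f : Bundle M → ℝ) : ℝ :=
  sSup {y : ℝ | ∃ X : Finset (Bundle M), Feasible M Menu X ∧ y = ∑ b ∈ X, f b}

/-- The `k`-th highest value among `w 0, …, w (N-1)` (for `1 ≤ k ≤ N`):
the maximum over sets `T` of `k` bidders of the minimum of `w` on `T`. -/
noncomputable def kthHighest (N : ℕ) (w : Fin N → ℝ) (k : ℕ) : ℝ :=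
  sSup {x : ℝ | ∃ T : Finset (Fin N), T.card = k ∧ x = sInf (w '' (T : Set (Fin N)))}

/-- The `k`-th rank guarantee `R^k_𝓜(v)`. -/
noncomputable def rankGuarantee (M N : ℕ) (Menu : Finset (Bundle M))
    (v : Fin N → Valuation M) (k : ℕ) : ℝ :=
  maxAlloc M Menu fun b => kthHighest N (fun n => v n b) k

/-- The ex-post efficient surplus: the maximum over feasible allocations `X` with
`|X| ≤ N` and injective assignments `ι` of bundles in `X` to bidders of the total value. -/
noncomputable def surplusEx (M N : ℕ) (Menu : Finset (Bundle M))
    (v : Fin N → Valuation M) : ℝ :=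
  sSup {y : ℝ | ∃ X : Finset (Bundle M), Feasible M Menu X ∧ X.card ≤ N ∧
    ∃ ι : Bundle M → Fin N, Set.InjOn ι ↑X ∧ y = ∑ b ∈ X, v (ι b) b}

/-- The average `F̄ = (1/N) ∑ₙ Fₙ` of the bidder-marginals of `F`. -/
noncomputable def avgMarginal (M N : ℕ) (F : Measure (Fin N → Valuation M)) :
    Measure (Valuation M) :=
  (N : ℝ≥0∞)⁻¹ • ∑ n : Fin N, F.map (fun v => v n)

/-- The ex-ante efficient surplus `V_𝓜(F)`. -/
noncomputable def Vsurplus (M N : ℕ) (Menu : Finset (Bundle M))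
    (F : Measure (Fin N → Valuation M)) : ℝ :=
  ∫ v, surplusEx M N Menu v ∂F

/-- A Borel probability measure on valuation profiles (supported on profiles of
valuations bounded by `vbar`). -/
def ProfileOK (M N : ℕ) (vbar : ℝ) (F : Measure (Fin N → Valuation M)) : Prop :=
  IsProbabilityMeasure F ∧ F {v | ∀ n, IsValuation M vbar (v n)} = 1

/-- A Borel probability measure on valuations (supported on valuations bounded by `vbar`). -/
def ValOK (M : ℕ) (vbar : ℝ) (G : Measure (Valuation M)) : Prop :=
  IsProbabilityMeasure G ∧ G {w | IsValuation M vbar w} = 1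

/-- `κ` is a partition of the bundle `b` into nonempty, pairwise disjoint parts. -/
def IsPartitionOf (M : ℕ) (κ : Finset (Bundle M)) (b : Bundle M) : Prop :=
  (∀ c ∈ κ, c ≠ ∅) ∧ (∀ c ∈ κ, ∀ c' ∈ κ, c ≠ c' → Disjoint c c') ∧ κ.sup id = b

/-- Feasibility for homogeneous goods: total number of allocated items is at most `M`. -/
def FeasibleQ (M : ℕ) (Menu X : Finset (Bundle M)) : Prop :=
  X ⊆ Menu ∧ ∑ b ∈ X, b.card ≤ M

/-- The maximum of `∑ b ∈ X, f b` over homogeneous-goods-feasible allocations `X`. -/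
noncomputable def maxAllocQ (M : ℕ) (Menu : Finset (Bundle M)) (f : Bundle M → ℝ) : ℝ :=
  sSup {y : ℝ | ∃ X : Finset (Bundle M), FeasibleQ M Menu X ∧ y = ∑ b ∈ X, f b}

/-- An assignment of pairwise disjoint bundles to the `N` bidders. -/
def IsAssignment (M N : ℕ) (a : Fin N → Bundle M) : Prop :=
  ∀ n n' : Fin N, n ≠ n' → Disjoint (a n) (a n')

/-- An assignment is efficient if it maximizes total value over all assignments. -/
def IsEfficient (M N : ℕ) (v : Fin N → Valuation M) (a : Fin N → Bundle M) : Prop :=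
  IsAssignment M N a ∧
    ∀ a' : Fin N → Bundle M, IsAssignment M N a' → ∑ n, v n (a' n) ≤ ∑ n, v n (a n)

/-- The VCG revenue at the efficient assignment `a`: the sum over bidders `n` of
`max_{assignments to bidders other than n} ∑_{n' ≠ n} v^{n'} − ∑_{n' ≠ n} v^{n'}(a n')`. -/
noncomputable def vcgRevenue (M N : ℕ) (v : Fin N → Valuation M)
    (a : Fin N → Bundle M) : ℝ :=
  ∑ n : Fin N,
    (sSup {y : ℝ | ∃ a' : Fin N → Bundle M, IsAssignment M N a' ∧ a' n = ∅ ∧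
        y = ∑ n' ∈ Finset.univ.erase n, v n' (a' n')}
      - ∑ n' ∈ Finset.univ.erase n, v n' (a n'))

/-- An unbounded valuation: value `0` for the empty bundle and nonnegative values. -/
def IsValuationNN (M : ℕ) (v : Valuation M) : Prop :=
  v ∅ = 0 ∧ ∀ b : Bundle M, 0 ≤ v b

/-- The top-`(k-1)/N` quantile of `v b` under `G`. -/
noncomputable def quantileQ (M N k : ℕ) (G : Measure (Valuation M)) (b : Bundle M) : ℝ :=
  sInf {q : ℝ | 0 ≤ q ∧ G {w | q < w b} ≤ ((k - 1 : ℕ) : ℝ≥0∞) / (N : ℝ≥0∞)}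

/-!
Give every bidder `n` an allocation `Xⁿ` that is optimal for `vⁿ`, and regroup
`∑ₙ ∑_{b ∈ Xⁿ} vⁿ_b` by bundles. For a fixed bundle `b`, fewer than `k` bidders value `b`
strictly above `v⁽ᵏ⁾_b`, so the bidders holding `b` contribute at most `(k-1)·v̄` plus
`v⁽ᵏ⁾_b` each. Regrouping the remaining terms by bidders again, each `Xⁿ` is a feasible
allocation for the values `v⁽ᵏ⁾`, so they add up to at most `N · Rᵏ_𝓜(v)`.
-/

section MaxAlloc

variable {M : ℕ} (Menu : Finset (Bundle M)) (f : Bundle M → ℝ)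

lemma feasible_empty : Feasible M Menu ∅ :=
  ⟨Finset.empty_subset _, by simp⟩

lemma finite_allocationValues :
    {y : ℝ | ∃ X : Finset (Bundle M), Feasible M Menu X ∧ y = ∑ b ∈ X, f b}.Finite :=
  (Set.finite_range fun X : Finset (Bundle M) => ∑ b ∈ X, f b).subset
    (by rintro y ⟨X, -, rfl⟩; exact ⟨X, rfl⟩)

lemma le_maxAlloc {X : Finset (Bundle M)} (hX : Feasible M Menu X) :
    ∑ b ∈ X, f b ≤ maxAlloc M Menu f :=
  le_csSup (finite_allocationValues Menu f).bddAbove ⟨X, hX, rfl⟩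

lemma maxAlloc_nonneg : 0 ≤ maxAlloc M Menu f := by
  simpa using le_maxAlloc Menu f (feasible_empty Menu)

lemma exists_feasible_maxAlloc_eq :
    ∃ X : Finset (Bundle M), Feasible M Menu X ∧ maxAlloc M Menu f = ∑ b ∈ X, f b :=
  Set.Nonempty.csSup_mem (s := {y : ℝ | ∃ X, Feasible M Menu X ∧ y = ∑ b ∈ X, f b})
    ⟨0, ∅, feasible_empty Menu, by simp⟩ (finite_allocationValues Menu f)

end MaxAlloc

section KthHighest

variable {N k : ℕ} (w : Fin N → ℝ)

lemma finite_kthHighestCandidates :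
    {x : ℝ | ∃ T : Finset (Fin N), T.card = k ∧ x = sInf (w '' (T : Set (Fin N)))}.Finite :=
  (Set.finite_range fun T : Finset (Fin N) => sInf (w '' (T : Set (Fin N)))).subset
    (by rintro x ⟨T, -, rfl⟩; exact ⟨T, rfl⟩)

lemma sInf_image_le_kthHighest {T : Finset (Fin N)} (hT : T.card = k) :
    sInf (w '' (T : Set (Fin N))) ≤ kthHighest N w k :=
  le_csSup (finite_kthHighestCandidates w).bddAbove ⟨T, hT, rfl⟩

lemma kthHighest_nonneg {w : Fin N → ℝ} (hw : ∀ n, 0 ≤ w n) : 0 ≤ kthHighest N w k :=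
  Real.sSup_nonneg <| by
    rintro x ⟨T, -, rfl⟩
    exact Real.sInf_nonneg <| by rintro _ ⟨n, -, rfl⟩; exact hw n

lemma card_filter_kthHighest_lt (hk : 1 ≤ k) :
    (Finset.univ.filter fun n => kthHighest N w k < w n).card < k := by
  by_contra! hcard
  obtain ⟨T, hTsub, hTcard⟩ := Finset.exists_subset_card_eq hcard
  have hTne : (w '' (T : Set (Fin N))).Nonempty :=
    (Finset.coe_nonempty.mpr (Finset.card_pos.mp (by omega))).image w
  obtain ⟨n, hnT, hn⟩ := hTne.csInf_mem ((T.finite_toSet).image w)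
  have hlt : kthHighest N w k < w n := (Finset.mem_filter.mp (hTsub hnT)).2
  have hle : w n ≤ kthHighest N w k := hn ▸ sInf_image_le_kthHighest w hTcard
  exact hlt.not_ge hle

end KthHighest

lemma sum_le_card_mul_add_card_filter_mul {ι : Type*} (A : Finset ι) {w : ι → ℝ}
    {K c : ℝ} (hK : 0 ≤ K) (hw : ∀ n ∈ A, w n ≤ c) :
    ∑ n ∈ A, w n ≤ A.card * K + (A.filter fun n => K < w n).card * c := by
  calc ∑ n ∈ A, w n ≤ ∑ n ∈ A, (K + if K < w n then c else 0) := by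
        refine Finset.sum_le_sum fun n hn => ?_
        split_ifs with h
        · linarith [hw n hn]
        · linarith [not_lt.mp h]
    _ = A.card * K + (A.filter fun n => K < w n).card * c := by
        simp [Finset.sum_add_distrib, Finset.sum_ite]

lemma sum_le_kthHighest {N k : ℕ} (hk : 1 ≤ k) {vbar : ℝ} (hvbar : 0 ≤ vbar)
    {w : Fin N → ℝ} (hw : ∀ n, 0 ≤ w n ∧ w n ≤ vbar) (A : Finset (Fin N)) :
    ∑ n ∈ A, w n ≤ ((k : ℝ) - 1) * vbar + A.card * kthHighest N w k := by
  set K := kthHighest N w k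
  have hcount : ((A.filter fun n => K < w n).card : ℝ) ≤ (k : ℝ) - 1 := by
    have := (Finset.card_le_card (Finset.filter_subset_filter (fun n => K < w n)
      (Finset.subset_univ A))).trans_lt (card_filter_kthHighest_lt w hk)
    rw [le_sub_iff_add_le]
    exact_mod_cast this
  calc ∑ n ∈ A, w n ≤ A.card * K + (A.filter fun n => K < w n).card * vbar :=
        sum_le_card_mul_add_card_filter_mul A (kthHighest_nonneg fun n => (hw n).1)
          fun n _ => (hw n).2
    _ ≤ ((k : ℝ) - 1) * vbar + A.card * K := by
        linarith [mul_le_mul_of_nonneg_right hcount hvbar]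

lemma sum_sum_eq_sum_sum_filter {ι α : Type*} [Fintype ι] [DecidableEq α]
    {X : ι → Finset α} {S : Finset α} (hX : ∀ n, X n ⊆ S) (f : ι → α → ℝ) :
    ∑ n, ∑ b ∈ X n, f n b = ∑ b ∈ S, ∑ n ∈ Finset.univ.filter fun n => b ∈ X n, f n b :=
  Finset.sum_comm' fun n b => by
    simpa using fun hb : b ∈ X n => hX n hb

lemma sum_maxAlloc_le_rankGuarantee {M N : ℕ} {vbar : ℝ} (hvbar : 0 ≤ vbar)
    {v : Fin N → Valuation M} (hv : ∀ n, IsValuation M vbar (v n))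
    (Menu : Finset (Bundle M)) {k : ℕ} (hk : 1 ≤ k) :
    ∑ n, maxAlloc M Menu (v n)
      ≤ Menu.card * (((k : ℝ) - 1) * vbar) + N * rankGuarantee M N Menu v k := by
  classical
  set K : Bundle M → ℝ := fun b => kthHighest N (fun n => v n b) k
  choose X hXfeas hXval using fun n => exists_feasible_maxAlloc_eq Menu (v n)
  have hXsub : ∀ n, X n ⊆ Menu := fun n => (hXfeas n).1
  calc ∑ n, maxAlloc M Menu (v n)
      = ∑ b ∈ Menu, ∑ n ∈ Finset.univ.filter fun n => b ∈ X n, v n b := by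
        simp_rw [hXval]; exact sum_sum_eq_sum_sum_filter hXsub _
    _ ≤ ∑ b ∈ Menu, (((k : ℝ) - 1) * vbar
          + ∑ n ∈ Finset.univ.filter fun n => b ∈ X n, K b) := by
        refine Finset.sum_le_sum fun b _ => ?_
        rw [Finset.sum_const, nsmul_eq_mul]
        exact sum_le_kthHighest hk hvbar (fun n => (hv n).2 b) _
    _ = Menu.card * (((k : ℝ) - 1) * vbar) + ∑ n, ∑ b ∈ X n, K b := by
        rw [Finset.sum_add_distrib, Finset.sum_const, nsmul_eq_mul,
          sum_sum_eq_sum_sum_filter hXsub]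
    _ ≤ Menu.card * (((k : ℝ) - 1) * vbar) + N * rankGuarantee M N Menu v k := by
        gcongr
        simpa [rankGuarantee] using Finset.sum_le_card_nsmul Finset.univ _ _ fun n _ =>
          le_maxAlloc Menu K (hXfeas n)

theorem rank_guarantee_average_bound_general
    (M N : ℕ) (vbar : ℝ) (hvbar : 0 ≤ vbar)
    (v : Fin N → Valuation M) (hv : ∀ n, IsValuation M vbar (v n))
    (Menu : Finset (Bundle M))
    (k : ℕ) (hk1 : 1 ≤ k) :
    rankGuarantee M N Menu v k ≥
      (1 / (N : ℝ)) * ∑ n : Fin N, maxAlloc M Menu (v n)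
        - ((k : ℝ) - 1) * (Menu.card : ℝ) * vbar / (N : ℝ) := by
  have hsum := sum_maxAlloc_le_rankGuarantee hvbar hv Menu hk1
  calc (1 / (N : ℝ)) * ∑ n, maxAlloc M Menu (v n) - ((k : ℝ) - 1) * Menu.card * vbar / N
      = (∑ n, maxAlloc M Menu (v n) - Menu.card * (((k : ℝ) - 1) * vbar)) / N := by ring
    _ ≤ rankGuarantee M N Menu v k :=
        div_le_of_le_mul₀ N.cast_nonneg (maxAlloc_nonneg Menu _) (by rw [mul_comm]; linarith)

/-- For any valuation profile `v`, menu `𝓜` and `1 ≤ k ≤ N`,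
`R^k_𝓜(v) ≥ (1/N) ∑ₙ max_{X ∈ 𝓑(𝓜)} ∑_{b∈X} vⁿ_b − (k−1)·|𝓜|·v̄/N`. -/
theorem rank_guarantee_average_bound
    (M N : ℕ) (hM : 1 ≤ M) (vbar : ℝ) (hvbar : 0 ≤ vbar)
    (v : Fin N → Valuation M) (hv : ∀ n, IsValuation M vbar (v n))
    (Menu : Finset (Bundle M)) (hMenu : IsMenu M Menu)
    (k : ℕ) (hk1 : 1 ≤ k) (hkN : k ≤ N) :
    rankGuarantee M N Menu v k ≥
      (1 / (N : ℝ)) * ∑ n : Fin N, maxAlloc M Menu (v n)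
        - ((k : ℝ) - 1) * (Menu.card : ℝ) * vbar / (N : ℝ) :=
  rank_guarantee_average_bound_general M N vbar hvbar v hv Menu k hk1

end RankGuaranteedAuctions
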